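/- arXiv:2401.00329 — 2 statements merged into one kernel-verified Lean document; each statement's English description precedes it below -/
import Mathlib

section
/- If a network element has exact service curve S (i.e., D(t) = (A ⊗ S)(t) for all t, where (f ⊗ g)(t) = min_{0 ≤ s ≤ t}(f(s) + g(t-s))), then the maximum backlog B_max = sup_{t≥0}(A(t) - D(t)) satisfies B_max = sup_{s≥0}(E_A(s) - S(s)) = (E_A ⊘ S)(0). -/
/-- For an exact service curve `S`, the maximum backlog equals `(E_A ⊘ S)(0)`. -/
theorem max_backlog_eq_deconv
    (A D S : ℕ → ℝ) (hA0 : A 0 = 0) (hS0 : S 0 = 0)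
    (hmonoA : Monotone A) (hmonoS : Monotone S)
    (hD : ∀ t : ℕ, D t = ⨅ s : Fin (t + 1), (A s + S (t - (s : ℕ))))
    (hbddE : ∀ τ : ℕ, BddAbove (Set.range fun t : ℕ => A (t + τ) - A t))
    (hbddB : BddAbove (Set.range fun t : ℕ => A t - D t))
    (hbddES : BddAbove (Set.range fun s : ℕ => (⨆ t : ℕ, (A (t + s) - A t)) - S s)) :
    (⨆ t : ℕ, (A t - D t)) = ⨆ s : ℕ, ((⨆ t : ℕ, (A (t + s) - A t)) - S s) := by
  apply le_antisymm
  · apply ciSup_le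
    intro t
    -- the infimum over Fin (t+1) is attained
    obtain ⟨i, hi⟩ := Finite.exists_min (fun s : Fin (t + 1) => A s + S (t - (s : ℕ)))
    have hDt : D t = A i + S (t - (i : ℕ)) := by
      rw [hD t]
      exact le_antisymm (ciInf_le (Finite.bddBelow_range _) i) (le_ciInf hi)
    have hit : (i : ℕ) ≤ t := Nat.lt_succ_iff.mp i.isLt
    have key : A t - D t ≤ (⨆ u : ℕ, (A (u + (t - (i : ℕ))) - A u)) - S (t - (i : ℕ)) := by
      rw [hDt]
      have h1 : A t - (A i + S (t - (i : ℕ)))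
          = (A ((i : ℕ) + (t - (i : ℕ))) - A i) - S (t - (i : ℕ)) := by
        rw [Nat.add_sub_cancel' hit]; ring
      rw [h1]
      have h2 : A ((i : ℕ) + (t - (i : ℕ))) - A i
          ≤ ⨆ u : ℕ, (A (u + (t - (i : ℕ))) - A u) :=
        le_ciSup (hbddE _) (i : ℕ)
      linarith
    exact key.trans (le_ciSup hbddES (t - (i : ℕ)))
  · apply ciSup_le
    intro s
    have h : (⨆ t : ℕ, (A (t + s) - A t)) ≤ (⨆ t : ℕ, (A t - D t)) + S s := by
      apply ciSup_le
      intro t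
      have hDle : D (t + s) ≤ A t + S s := by
        rw [hD (t + s)]
        have : (t : ℕ) < t + s + 1 := by omega
        have h3 := ciInf_le (Finite.bddBelow_range
          (fun u : Fin (t + s + 1) => A u + S (t + s - (u : ℕ)))) (⟨t, this⟩ : Fin (t + s + 1))
        simpa using h3
      have h4 : A (t + s) - D (t + s) ≤ ⨆ u : ℕ, (A u - D u) := le_ciSup hbddB (t + s)
      linarith
    linarith
end

section
/- If S is a lower service curve (D(t) ≥ (A ⊗ S)(t) for all t) and E is an arrival curve for A, then the backlog satisfies B(t) = A(t) - D(t) ≤ (E ⊘ S)(0) = sup_{s ≥ 0}(E(s) - S(s)) for all t. -/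
/-- Backlog bound for a lower service curve `S` and an arrival curve `E`. -/
theorem backlog_bound_lower_service_curve
    (A D S E : ℕ → ℝ) (hA0 : A 0 = 0) (hD0 : D 0 = 0) (hS0 : S 0 = 0)
    (hmonoA : Monotone A) (hDA : ∀ t, D t ≤ A t)
    (hS : ∀ t : ℕ, (⨅ s : Fin (t + 1), (A s + S (t - (s : ℕ)))) ≤ D t)
    (hE : ∀ s t : ℕ, A (t + s) - A t ≤ E s)
    (hbdd : BddAbove (Set.range fun s : ℕ => E s - S s)) :
    ∀ t : ℕ, A t - D t ≤ ⨆ s : ℕ, (E s - S s) := by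
  intro t
  obtain ⟨s, hs⟩ := Finite.exists_min (fun s : Fin (t + 1) => A s + S (t - (s : ℕ)))
  have hinf : (⨅ s : Fin (t + 1), (A s + S (t - (s : ℕ)))) = A s + S (t - (s : ℕ)) := by
    apply le_antisymm (ciInf_le (Finite.bddBelow_range _) s)
    exact le_ciInf hs
  have hD : A s + S (t - (s : ℕ)) ≤ D t := hinf ▸ hS t
  have hsle : (s : ℕ) ≤ t := Nat.lt_succ_iff.mp s.isLt
  have hAt : A t - A s ≤ E (t - (s : ℕ)) := by
    have := hE (t - (s : ℕ)) s
    rwa [Nat.add_sub_cancel' hsle] at this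
  have hsup : E (t - (s : ℕ)) - S (t - (s : ℕ)) ≤ ⨆ s : ℕ, (E s - S s) :=
    le_ciSup hbdd (t - (s : ℕ))
  linarith
end
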